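/- Let L be a function analytic on a closed horizontal segment [σ₁ + iT, σ₂ + iT] (σ₁ < σ₂), nonvanishing at the endpoints, and suppose Re L(σ + iT) has at most N zeros for σ ∈ [σ₁, σ₂]. Then any continuous branch of arg L(σ + iT) along the segment satisfies |arg L(σ + iT) − arg L(σ₂ + iT)| ≤ π(N + 1) for all σ ∈ [σ₁, σ₂]. -/
import Mathlib


/-- Argument-bounding lemma: if `Re L(σ + iT)` has at most `N` zeros on
`[σ₁, σ₂]`, then any continuous branch of `arg L(σ + iT)` varies by at most
`π(N + 1)` from its value at `σ₂`. -/
theorem stmt_18 (L : ℂ → ℂ) (σ₁ σ₂ T : ℝ) (h12 : σ₁ < σ₂)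
    (U : Set ℂ) (hU : IsOpen U)
    (hsub : ∀ σ ∈ Set.Icc σ₁ σ₂, (σ : ℂ) + Complex.I * T ∈ U)
    (hL : DifferentiableOn ℂ L U)
    (hend1 : L ((σ₁ : ℂ) + Complex.I * T) ≠ 0)
    (hend2 : L ((σ₂ : ℂ) + Complex.I * T) ≠ 0)
    (N : ℕ) (S : Finset ℝ) (hScard : S.card ≤ N)
    (hSz : ∀ σ ∈ Set.Icc σ₁ σ₂, (L ((σ : ℂ) + Complex.I * T)).re = 0 → σ ∈ S)
    (θ : ℝ → ℝ) (hθ : ContinuousOn θ (Set.Icc σ₁ σ₂))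
    (hbranch : ∀ σ ∈ Set.Icc σ₁ σ₂,
      L ((σ : ℂ) + Complex.I * T)
        = (‖L ((σ : ℂ) + Complex.I * T)‖ : ℂ) * Complex.exp (Complex.I * θ σ)) :
    ∀ σ ∈ Set.Icc σ₁ σ₂, |θ σ - θ σ₂| ≤ Real.pi * (N + 1) := by
  intro σ hσ
  by_contra hcon
  push_neg at hcon
  have hπ := Real.pi_pos
  have hσ₂ : σ₂ ∈ Set.Icc σ₁ σ₂ := ⟨h12.le, le_refl _⟩
  set c := min (θ σ) (θ σ₂) with hc
  set d := max (θ σ) (θ σ₂) with hd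
  have hdc : Real.pi * (N + 1) < d - c := by
    rw [hc, hd, max_sub_min_eq_abs, abs_sub_comm]; exact hcon
  set k₀ : ℤ := ⌊(c - Real.pi / 2) / Real.pi⌋ + 1 with hk₀
  have hlow : c < Real.pi / 2 + (k₀ : ℝ) * Real.pi := by
    have h1 : (c - Real.pi / 2) / Real.pi < (k₀ : ℝ) := by
      push_cast [hk₀]; exact Int.lt_floor_add_one _
    have h2 := (div_lt_iff₀ hπ).mp h1
    linarith
  have hup : Real.pi / 2 + (k₀ : ℝ) * Real.pi ≤ c + Real.pi := by
    have h1 : (k₀ : ℝ) ≤ (c - Real.pi / 2) / Real.pi + 1 := by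
      push_cast [hk₀]
      have := Int.floor_le ((c - Real.pi / 2) / Real.pi)
      linarith
    have h3 := mul_le_mul_of_nonneg_right h1 hπ.le
    rw [add_mul, div_mul_cancel₀ _ hπ.ne', one_mul] at h3
    linarith
  have hsubI : Set.uIcc σ σ₂ ⊆ Set.Icc σ₁ σ₂ := by
    rw [← Set.uIcc_of_le h12.le]
    exact Set.uIcc_subset_uIcc ((Set.uIcc_of_le h12.le).symm ▸ hσ)
      ((Set.uIcc_of_le h12.le).symm ▸ hσ₂)
  have hθ' : ContinuousOn θ (Set.uIcc σ σ₂) := hθ.mono hsubI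
  have hex : ∀ i : ℕ, ∃ x, i ≤ N → x ∈ S ∧ θ x = Real.pi / 2 + ((k₀ : ℝ) + i) * Real.pi := by
    intro i
    by_cases hi : i ≤ N
    · set v := Real.pi / 2 + ((k₀ : ℝ) + i) * Real.pi with hv
      have hcv : c < v := by
        have h0 : (0:ℝ) ≤ (i : ℝ) * Real.pi := by positivity
        rw [hv]; nlinarith
      have hvd : v < d := by
        have hiN : (i : ℝ) ≤ N := by exact_mod_cast hi
        rw [hv]; nlinarith
      have hmem : v ∈ Set.uIcc (θ σ) (θ σ₂) := by
        rw [Set.uIcc]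
        exact ⟨hcv.le, hvd.le⟩
      obtain ⟨x, hx, hθx⟩ := intermediate_value_uIcc hθ' hmem
      refine ⟨x, fun _ => ⟨?_, hθx⟩⟩
      have hxI : x ∈ Set.Icc σ₁ σ₂ := hsubI hx
      apply hSz x hxI
      have hb := hbranch x hxI
      have hre : (L ((x : ℂ) + Complex.I * T)).re
          = ‖L ((x : ℂ) + Complex.I * T)‖ * Real.cos (θ x) := by
        rw [hb, mul_comm Complex.I ((θ x : ℝ) : ℂ)]
        simp
      rw [hre, hθx]
      have hcos : Real.cos v = 0 := by
        have hcast : ((k₀ : ℝ) + i) = (((k₀ + (i:ℤ)) : ℤ) : ℝ) := by push_cast; ring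
        have hs : Real.sin (((k₀ : ℝ) + i) * Real.pi) = 0 := by
          rw [hcast]; exact Real.sin_int_mul_pi _
        rw [hv]
        simp [Real.cos_add, hs]
      rw [hcos, mul_zero]
    · exact ⟨0, fun h => absurd h hi⟩
  choose x hx using hex
  have hinj : Set.InjOn x (Finset.range (N + 1)) := by
    intro i hi j hj hij
    simp only [Finset.coe_range, Set.mem_Iio, Nat.lt_succ_iff] at hi hj
    have hi' := (hx i hi).2
    have hj' := (hx j hj).2
    rw [hij, hj'] at hi'
    have hR : ((i : ℝ)) = j := by
      have hπne : Real.pi ≠ 0 := hπ.ne'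
      have := hi'
      nlinarith [this, hπ]
    exact_mod_cast hR
  have hcard := Finset.card_le_card_of_injOn x
    (fun i hi => (hx i (by simpa [Nat.lt_succ_iff] using Finset.mem_range.mp hi)).1) hinj
  simp [Finset.card_range] at hcard
  omega
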